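/- arXiv:1908.08905 — 8 statements merged into one kernel-verified Lean document; each statement's English description precedes it below -/
import Mathlib

section
/- For a segment s(u) in a drawing whose corresponding vertex u of the intersection graph has degree δ_u, there are exactly δ_u + 1 relevant symmetric stub pairs for s(u): the δ_u stub lengths ℓ_1(u) < ... < ℓ_{δ_u}(u) determined by the crossing points (each ℓ_i(u) being the largest symmetric stub avoiding the i-th closest crossing), together with the whole segment ℓ_0(u); any maximum-ink symmetric partial edge drawing can be assumed to use only these stub lengths. -/
/-! Rounding every stub length up to the next candidate is valid and only adds ink: no candidate
lies strictly between the old and the new length, and every crossing distance is a candidate, so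
the longer stubs cover exactly the crossing points the old ones covered. -/

namespace Finset

variable {α β : Type*}

theorem card_insert_image_le [DecidableEq β] (s : Finset α) (f : α → β) (b : β) :
    (insert b (s.image f)).card ≤ s.card + 1 :=
  (card_insert_le _ _).trans (Nat.add_le_add_right card_image_le 1)

theorem card_insert_image_of_injOn [DecidableEq β] {s : Finset α} {f : α → β} {b : β}
    (hf : Set.InjOn f s) (hb : ∀ a ∈ s, f a ≠ b) :
    (insert b (s.image f)).card = s.card + 1 := by
  have hb' : b ∉ s.image f := by
    rw [mem_image]
    rintro ⟨a, ha, rfl⟩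
    exact hb a ha rfl
  rw [card_insert_of_notMem hb', card_image_of_injOn hf]

theorem exists_least_mem_ge [LinearOrder α] (C : Finset α) {x c₀ : α} (hc₀ : c₀ ∈ C)
    (hx : x ≤ c₀) : ∃ y ∈ C, x ≤ y ∧ ∀ c ∈ C, c < y → c < x := by
  obtain ⟨y, hy, hmin⟩ := (C.filter (x ≤ ·)).exists_min_image id ⟨c₀, mem_filter.2 ⟨hc₀, hx⟩⟩
  rw [mem_filter] at hy
  refine ⟨y, hy.1, hy.2, fun c hc hcy => lt_of_not_ge fun hxc => ?_⟩
  exact (hmin c (mem_filter.2 ⟨hc, hxc⟩)).not_gt hcy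

end Finset

theorem stmt_1_general {V : Type*} [Fintype V]
    (len : V → ℝ) (cross : V → V → Prop) [DecidableRel cross]
    (md : V → V → ℝ)
    (cross_symm : ∀ u v, cross u v → cross v u)
    -- the degree of u in the intersection graph
    (δ : V → ℕ) (hδ : ∀ u, δ u = (Finset.univ.filter fun v => cross u v).card)
    (Cand : V → Finset ℝ)
    (hCand : ∀ u, Cand u =
      insert (len u / 2) ((Finset.univ.filter fun v => cross u v).image (md u)))
    -- validity and ink of a SPED
    (valid : (V → ℝ) → Prop)
    (hvalid : ∀ t, valid t ↔
      ((∀ u, 0 < t u ∧ t u ≤ len u / 2) ∧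
        ∀ u v, cross u v → ¬ (md u v < t u ∧ md v u < t v)))
    (ink : (V → ℝ) → ℝ) (hink : ∀ t, ink t = ∑ u, 2 * t u) :
    (∀ u, (Cand u).card ≤ δ u + 1) ∧
    (∀ u, Set.InjOn (md u) {v | cross u v} →
        (∀ v, cross u v → md u v ≠ len u / 2) → (Cand u).card = δ u + 1) ∧
    -- any SPED can be replaced by one with at least as much ink using only these lengths
    (∀ t, valid t → ∃ t', valid t' ∧ ink t ≤ ink t' ∧ ∀ u, t' u ∈ Cand u) := by
  refine ⟨fun u => ?_, fun u hinj hne => ?_, fun t ht => ?_⟩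
  · rw [hCand u, hδ u]
    exact Finset.card_insert_image_le _ _ _
  · rw [hCand u, hδ u]
    exact Finset.card_insert_image_of_injOn (fun a ha b hb => hinj (by simpa using ha)
      (by simpa using hb)) (fun v hv => hne v (by simpa using hv))
  · have hlen_mem : ∀ u, len u / 2 ∈ Cand u := fun u => by
      rw [hCand u]
      exact Finset.mem_insert_self _ _
    have hmd_mem : ∀ u v, cross u v → md u v ∈ Cand u := fun u v huv => by
      rw [hCand u]
      exact Finset.mem_insert_of_mem (Finset.mem_image_of_mem _ (by simpa using huv))
    obtain ⟨hbounds, hdisjoint⟩ := (hvalid t).1 ht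
    choose t' ht'_mem hle hcovers using
      fun u => (Cand u).exists_least_mem_ge (hlen_mem u) (hbounds u).2
    refine ⟨t', (hvalid t').2 ⟨fun u => ⟨(hbounds u).1.trans_le (hle u), ?_⟩, ?_⟩, ?_, ht'_mem⟩
    · exact le_of_not_gt fun h => (hcovers u _ (hlen_mem u) h).not_ge (hbounds u).2
    · rintro u v huv ⟨hu, hv⟩
      exact hdisjoint u v huv ⟨hcovers u _ (hmd_mem u v huv) hu,
        hcovers v _ (hmd_mem v u (cross_symm u v huv)) hv⟩
    · rw [hink, hink]
      gcongr with u
      exact hle u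

/-- For a segment s(u) whose vertex u of the intersection graph has degree
δ_u, there are exactly δ_u + 1 relevant symmetric stub pairs: the δ_u stub lengths
induced by the crossing points (the largest symmetric stub avoiding a given crossing),
together with the whole segment; any maximum-ink SPED can be assumed to use only these
stub lengths.

Model: `V` is the set of segments, `len u` the length of segment `u`, `cross` the crossing
relation, and `md u v` the distance from the crossing point of `u` and `v` to the nearer
endpoint of `u` (so a symmetric stub pair of per-side length `t` on `u` covers that
crossing point iff `md u v < t`).  A SPED assigns to each segment a per-side stub length
`t u` with `0 < t u ≤ len u / 2` (the value `len u / 2` is the whole segment) such that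
for no crossing pair both segments cover the crossing point.  The candidate set of `u` is
`Cand u = {md u v | v crosses u} ∪ {len u / 2}`, of cardinality exactly `δ u + 1` when the
crossing distances are pairwise distinct; and every SPED can be transformed into one of
at least as much ink using only candidate stub lengths. -/
theorem stmt_1 {V : Type*} [Fintype V] [DecidableEq V]
    (len : V → ℝ) (cross : V → V → Prop) [DecidableRel cross]
    (md : V → V → ℝ)
    (cross_symm : ∀ u v, cross u v → cross v u)
    (cross_irrefl : ∀ u, ¬ cross u u)
    (hlen : ∀ u, 0 < len u)
    (hmd : ∀ u v, cross u v → 0 < md u v ∧ md u v ≤ len u / 2)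
    -- the degree of u in the intersection graph
    (δ : V → ℕ) (hδ : ∀ u, δ u = (Finset.univ.filter fun v => cross u v).card)
    (Cand : V → Finset ℝ)
    (hCand : ∀ u, Cand u =
      insert (len u / 2) ((Finset.univ.filter fun v => cross u v).image (md u)))
    -- validity and ink of a SPED
    (valid : (V → ℝ) → Prop)
    (hvalid : ∀ t, valid t ↔
      ((∀ u, 0 < t u ∧ t u ≤ len u / 2) ∧
        ∀ u v, cross u v → ¬ (md u v < t u ∧ md v u < t v)))
    (ink : (V → ℝ) → ℝ) (hink : ∀ t, ink t = ∑ u, 2 * t u) :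
    (∀ u, (Cand u).card ≤ δ u + 1) ∧
    (∀ u, Set.InjOn (md u) {v | cross u v} →
        (∀ v, cross u v → md u v ≠ len u / 2) → (Cand u).card = δ u + 1) ∧
    -- any SPED can be replaced by one with at least as much ink using only these lengths
    (∀ t, valid t → ∃ t', valid t' ∧ ink t ≤ ink t' ∧ ∀ u, t' u ∈ Cand u) :=
  stmt_1_general len cross md cross_symm δ hδ Cand hCand valid hvalid ink hink
end

section
/- Let C be an intersection graph that is a cycle of segment pairs as in the variable gadget: an even cycle v_1, v_2, ..., v_{2p} of segments where consecutive segments cross, each crossing point is at distance 1 from an endpoint of each involved segment, and each segment has length 8 (so a segment contributes either its full length 8 or two stubs of total length 2). Then the gadget has exactly two maximum-ink SPEDs: one where all odd-indexed segments are drawn fully and all even-indexed segments are drawn as length-1 stub pairs, and the symmetric one; each achieves ink 10p. -/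
/-!
Writing the ink as `∑ i, (t i + t (i + 1))`, every pair of consecutive segments contributes at
most `5 = 4 + 1`, because one of the two stub lengths is at most 1; hence the ink is at most
`5 · 2p = 10p`. Equality forces every pair to contribute exactly `5`, which pins `t 0` to `1` or
`4`, after which `t` alternates between `t 0` and `5 - t 0`; on a cycle of even length this
alternation is consistent with the parity of the residues.
-/

theorem Fintype.sum_add_comp_add_right {G R : Type*} [AddGroup G] [Fintype G]
    [NonAssocSemiring R] (t : G → R) (g : G) :
    ∑ i, (t i + t (i + g)) = ∑ i, 2 * t i := by
  rw [Finset.sum_add_distrib, Fintype.sum_equiv (Equiv.addRight g) (fun i => t (i + g)) t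
    fun _ => rfl, ← Finset.mul_sum, two_mul]

theorem ZMod.val_add_one_mod_two {n : ℕ} [NeZero n] (hn : 2 ∣ n) (i : ZMod n) :
    (i + 1).val % 2 = (i.val + 1) % 2 := by
  have : i + 1 = ((i.val + 1 : ℕ) : ZMod n) := by push_cast; rw [ZMod.natCast_zmod_val]
  rw [this, ZMod.val_natCast, Nat.mod_mod_of_dvd _ hn]

section Alternating

variable {n : ℕ} {α : Type*}

def ZMod.Alternating (t : ZMod n → α) (a b : α) : Prop :=
  ∀ i : ZMod n, i.val % 2 = 0 → t i = a ∧ t (i + 1) = b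

variable [NeZero n] {t : ZMod n → α} {a b : α}

theorem ZMod.Alternating.eq_or_eq (hn : 2 ∣ n) (h : ZMod.Alternating t a b) (i : ZMod n) :
    (t i = a ∧ t (i + 1) = b) ∨ (t i = b ∧ t (i + 1) = a) := by
  rcases Nat.mod_two_eq_zero_or_one i.val with hi | hi
  · exact .inl (h i hi)
  · have hprev : (i - 1).val % 2 = 0 := by
      have := ZMod.val_add_one_mod_two hn (i - 1)
      rw [sub_add_cancel] at this
      omega
    have hnext : (i + 1).val % 2 = 0 := by rw [ZMod.val_add_one_mod_two hn]; omega
    refine .inr ⟨?_, (h _ hnext).1⟩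
    simpa using (h _ hprev).2

theorem ZMod.alternating_ite (hn : 2 ∣ n) (a b : α) :
    ZMod.Alternating (fun i : ZMod n => if i.val % 2 = 0 then a else b) a b := by
  intro i hi
  have : (i + 1).val % 2 = 1 := by rw [ZMod.val_add_one_mod_two hn]; omega
  simp [hi, this]

theorem ZMod.alternating_iff_add_eq [AddCommGroup α] (hn : 2 ∣ n) :
    ZMod.Alternating t a b ↔ t 0 = a ∧ ∀ i, t i + t (i + 1) = a + b := by
  constructor
  · intro h
    refine ⟨(h 0 (by simp)).1, fun i => ?_⟩
    rcases h.eq_or_eq hn i with ⟨hi, hi'⟩ | ⟨hi, hi'⟩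
    · rw [hi, hi']
    · rw [hi, hi', add_comm]
  · rintro ⟨h0, hsum⟩ i hi
    have hsucc : ∀ j, t (j + 1) = a + b - t j := fun j => eq_sub_of_add_eq' (hsum j)
    have heven : ∀ k : ℕ, t ((2 * k : ℕ) : ZMod n) = a := by
      intro k
      induction k with
      | zero => simpa using h0
      | succ k ih =>
        have : ((2 * (k + 1) : ℕ) : ZMod n) = ((2 * k : ℕ) : ZMod n) + 1 + 1 := by
          push_cast; ring
        rw [this, hsucc, hsucc, ih]
        abel
    obtain ⟨k, hk⟩ := Nat.dvd_of_mod_eq_zero hi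
    have hti : t i = a := by simpa [← hk, ZMod.natCast_zmod_val] using heven k
    exact ⟨hti, by rw [hsucc, hti, add_sub_cancel_left]⟩

end Alternating

theorem add_le_five_of_not_one_lt_and {a b : ℝ} (ha : a ≤ 4) (hb : b ≤ 4)
    (h : ¬ (1 < a ∧ 1 < b)) : a + b ≤ 5 := by
  by_cases ha1 : 1 < a
  · linarith [not_lt.mp fun hb1 => h ⟨ha1, hb1⟩]
  · linarith

theorem eq_one_or_eq_four_of_add_eq_five {a b : ℝ} (ha : a ≤ 4) (hb : b ≤ 4)
    (h : ¬ (1 < a ∧ 1 < b)) (hab : a + b = 5) : a = 1 ∨ a = 4 := by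
  by_cases ha1 : 1 < a
  · exact .inr (by linarith [not_lt.mp fun hb1 => h ⟨ha1, hb1⟩])
  · exact .inl (by linarith)

section Sped

variable {n : ℕ}

/-- A SPED of the variable gadget on the cycle `ZMod n`: `t i` is the length drawn on each side
of the midpoint of segment `i` (so `t i = 4` is the whole segment of length 8), and a drawn part
reaches the crossings, which lie at distance 1 from the endpoints, exactly when `1 < t i`. -/
def IsGadgetSped (t : ZMod n → ℝ) : Prop :=
  (∀ i, 0 < t i ∧ t i ≤ 4) ∧ ∀ i, ¬ (1 < t i ∧ 1 < t (i + 1))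

variable {t : ZMod n → ℝ}

theorem IsGadgetSped.add_succ_le (ht : IsGadgetSped t) (i : ZMod n) : t i + t (i + 1) ≤ 5 :=
  add_le_five_of_not_one_lt_and (ht.1 i).2 (ht.1 (i + 1)).2 (ht.2 i)

variable [NeZero n]

theorem IsGadgetSped.sum_le (ht : IsGadgetSped t) : ∑ i, 2 * t i ≤ 5 * n := by
  rw [← Fintype.sum_add_comp_add_right t 1]
  calc ∑ i, (t i + t (i + 1)) ≤ ∑ _i : ZMod n, 5 := Finset.sum_le_sum fun i _ => ht.add_succ_le i
    _ = 5 * n := by simp [ZMod.card, mul_comm]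

theorem IsGadgetSped.sum_eq_iff_forall_add_succ_eq (ht : IsGadgetSped t) :
    ∑ i, 2 * t i = 5 * n ↔ ∀ i, t i + t (i + 1) = 5 := by
  rw [← Fintype.sum_add_comp_add_right t 1,
    show (5 * n : ℝ) = ∑ _i : ZMod n, 5 by simp [ZMod.card, mul_comm]]
  simpa using Finset.sum_eq_sum_iff_of_le (s := Finset.univ) fun i _ => ht.add_succ_le i

theorem IsGadgetSped.sum_eq_iff (hn : 2 ∣ n) (ht : IsGadgetSped t) :
    ∑ i, 2 * t i = 5 * n ↔ ZMod.Alternating t 4 1 ∨ ZMod.Alternating t 1 4 := by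
  rw [ht.sum_eq_iff_forall_add_succ_eq, ZMod.alternating_iff_add_eq hn,
    ZMod.alternating_iff_add_eq hn, show (4 : ℝ) + 1 = 5 by norm_num,
    show (1 : ℝ) + 4 = 5 by norm_num]
  constructor
  · intro hsum
    rcases eq_one_or_eq_four_of_add_eq_five (ht.1 0).2 (ht.1 1).2 (by simpa using ht.2 0)
      (by simpa using hsum 0) with h0 | h0
    · exact .inr ⟨h0, hsum⟩
    · exact .inl ⟨h0, hsum⟩
  · rintro (⟨-, hsum⟩ | ⟨-, hsum⟩) <;> exact hsum

theorem exists_isGadgetSped_sum_eq (hn : 2 ∣ n) :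
    ∃ t : ZMod n → ℝ, IsGadgetSped t ∧ ∑ i, 2 * t i = 5 * n := by
  have halt := ZMod.alternating_ite (n := n) hn (4 : ℝ) 1
  set t₀ : ZMod n → ℝ := fun i => if i.val % 2 = 0 then 4 else 1
  have hsped : IsGadgetSped t₀ := by
    refine ⟨fun i => ?_, fun i => ?_⟩ <;>
      rcases halt.eq_or_eq hn i with ⟨hi, hi'⟩ | ⟨hi, hi'⟩ <;> norm_num [hi, hi']
  exact ⟨t₀, hsped, (hsped.sum_eq_iff hn).mpr (.inl halt)⟩

end Sped

theorem stmt_2_general (p : ℕ) [NeZero (2 * p)]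
    (valid : (ZMod (2 * p) → ℝ) → Prop)
    (hvalid : ∀ t, valid t ↔
      (∀ i, 0 < t i ∧ t i ≤ 4) ∧ ∀ i, ¬ (1 < t i ∧ 1 < t (i + 1)))
    (ink : (ZMod (2 * p) → ℝ) → ℝ)
    (hink : ∀ t, ink t = ∑ i, 2 * t i) :
    IsGreatest {I | ∃ t, valid t ∧ I = ink t} (10 * p) ∧
    (∀ t, valid t →
      (ink t = 10 * p ↔
        ((∀ i : ZMod (2 * p), i.val % 2 = 0 → t i = 4 ∧ t (i + 1) = 1) ∨
         (∀ i : ZMod (2 * p), i.val % 2 = 0 → t i = 1 ∧ t (i + 1) = 4)))) := by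
  obtain rfl : valid = IsGadgetSped := funext fun t => propext (hvalid t)
  obtain rfl : ink = fun t => ∑ i, 2 * t i := funext hink
  have hn : 2 ∣ 2 * p := dvd_mul_right 2 p
  have h10 : (10 * p : ℝ) = 5 * (2 * p : ℕ) := by push_cast; ring
  obtain ⟨t₀, ht₀, hsum₀⟩ := exists_isGadgetSped_sum_eq hn
  refine ⟨⟨⟨t₀, ht₀, by rw [h10]; exact hsum₀.symm⟩, ?_⟩, fun t ht => ?_⟩
  · rintro I ⟨t, ht, rfl⟩
    exact h10 ▸ ht.sum_le
  · exact h10 ▸ ht.sum_eq_iff hn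

/-- the variable gadget. An even cycle of 2p segments, each of length 8, in
which consecutive segments cross and each crossing point is at distance 1 from an endpoint
of each involved segment.  A SPED assigns to segment i a per-side stub length `t i` with
`0 < t i ≤ 4` (value 4 = the whole segment of length 8 is drawn); a drawn part covers a
crossing point (at distance 1 from an endpoint) iff the stub length exceeds 1, so validity
requires that for consecutive segments not both stub lengths exceed 1.  The ink is
`∑ 2 * t i`. The gadget has exactly two maximum-ink SPEDs, namely the two alternating
configurations (all odd-indexed segments full of length 8, all even-indexed ones drawn as
two length-1 stubs, or vice versa), each of ink 10p. -/
theorem stmt_2 (p : ℕ) (hp : 1 ≤ p) [NeZero (2 * p)]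
    (valid : (ZMod (2 * p) → ℝ) → Prop)
    (hvalid : ∀ t, valid t ↔
      (∀ i, 0 < t i ∧ t i ≤ 4) ∧ ∀ i, ¬ (1 < t i ∧ 1 < t (i + 1)))
    (ink : (ZMod (2 * p) → ℝ) → ℝ)
    (hink : ∀ t, ink t = ∑ i, 2 * t i) :
    IsGreatest {I | ∃ t, valid t ∧ I = ink t} (10 * p) ∧
    (∀ t, valid t →
      (ink t = 10 * p ↔
        ((∀ i : ZMod (2 * p), i.val % 2 = 0 → t i = 4 ∧ t (i + 1) = 1) ∨
         (∀ i : ZMod (2 * p), i.val % 2 = 0 → t i = 1 ∧ t (i + 1) = 4)))) :=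
  stmt_2_general p valid hvalid ink hink
end

section
/- In a clause gadget consisting of three pairwise crossing segments of length 8, with each crossing point at distance 1 from an endpoint of each involved segment, at most one of the three segments can be drawn fully in any SPED, and the maximum total ink contributed by the three segments is exactly 12 (one full segment of length 8 plus two stub pairs of total length 2 each). -/
/-! Since the segments cross pairwise, at most one stub length can exceed 1, so the ink is
at most one full segment plus stubs of length 1 on each of the other two; `![4, 1, 1]`
attains this. -/

open Finset

theorem sum_le_add_mul_of_at_most_one_gt {ι : Type*} [Fintype ι] {t : ι → ℝ} {a b : ℝ}
    (hb : ∀ i, t i ≤ b) (hab : a ≤ b) (h : ∀ i j, i ≠ j → ¬ (a < t i ∧ a < t j)) :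
    ∑ i, t i ≤ b + (Fintype.card ι - 1) * a := by
  classical
  by_cases hex : ∃ i, a < t i
  · obtain ⟨i, hi⟩ := hex
    have hrest : ∀ j ∈ univ.erase i, t j ≤ a := fun j hj =>
      not_lt.1 fun hj' => h i j (ne_of_mem_erase hj).symm ⟨hi, hj'⟩
    calc ∑ j, t j = t i + ∑ j ∈ univ.erase i, t j := (add_sum_erase _ _ (mem_univ i)).symm
      _ ≤ b + ∑ _j ∈ univ.erase i, a := add_le_add (hb i) (sum_le_sum hrest)
      _ = b + (Fintype.card ι - 1) * a := by
        rw [sum_const, card_erase_of_mem (mem_univ i), card_univ, nsmul_eq_mul,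
          Nat.cast_sub (Fintype.card_pos_iff.2 ⟨i⟩), Nat.cast_one]
  · simp only [not_exists, not_lt] at hex
    calc ∑ j, t j ≤ ∑ _j : ι, a := sum_le_sum fun j _ => hex j
      _ = Fintype.card ι * a := by rw [sum_const, card_univ, nsmul_eq_mul]
      _ ≤ b + (Fintype.card ι - 1) * a := by linarith

/-- the clause gadget.  Three pairwise crossing segments of length 8, each
crossing point at distance 1 from an endpoint of each involved segment.  A SPED assigns to
segment i a per-side stub length `t i` with `0 < t i ≤ 4` (value 4 means the segment of
length 8 is drawn fully); a drawn part covers a crossing point iff its stub length exceeds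
1, so validity requires that for each of the three crossing pairs not both stub lengths
exceed 1.  Then in any SPED at most one of the three segments is drawn fully, and the
maximum total ink contributed by the three segments is exactly 12 (one full segment of
length 8 plus two stub pairs of total length 2 each). -/
theorem stmt_3
    (valid : (Fin 3 → ℝ) → Prop)
    (hvalid : ∀ t, valid t ↔
      (∀ i, 0 < t i ∧ t i ≤ 4) ∧ ∀ i j, i ≠ j → ¬ (1 < t i ∧ 1 < t j))
    (ink : (Fin 3 → ℝ) → ℝ)
    (hink : ∀ t, ink t = ∑ i, 2 * t i) :
    (∀ t, valid t → ¬ ∃ i j : Fin 3, i ≠ j ∧ t i = 4 ∧ t j = 4) ∧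
    IsGreatest {I | ∃ t, valid t ∧ I = ink t} 12 := by
  refine ⟨fun t ht ⟨i, j, hij, hi, hj⟩ =>
    ((hvalid t).1 ht).2 i j hij ⟨by linarith, by linarith⟩, ⟨![4, 1, 1], ?_, ?_⟩, ?_⟩
  · rw [hvalid]
    refine ⟨fun i => by fin_cases i <;> norm_num, fun i j hij => ?_⟩
    fin_cases i <;> fin_cases j <;> simp_all
  · norm_num [hink, Fin.sum_univ_three, Matrix.cons_val_two]
  · rintro _ ⟨t, ht, rfl⟩
    obtain ⟨hbound, hcross⟩ := (hvalid t).1 ht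
    have hsum := sum_le_add_mul_of_at_most_one_gt (fun i => (hbound i).2) (by norm_num) hcross
    rw [hink, ← mul_sum]
    norm_num at hsum
    linarith
end

section
/- Any 2-plane straight-line drawing Γ admits, for every ε > 0, a partial edge drawing in which every segment s is drawn with total stub length at least |s| − ε; hence the supremum of ink over all PEDs of a 2-plane drawing equals the total length of all segments. -/
/-!
Cut every segment at one interior point and draw all of it except a tiny gap around that
point. If in each crossing pair at least one of the two segments is cut exactly at the
crossing, no two drawn stubs meet: distinct segments share at most one point. Such cuts exist
because the crossing graph has maximum degree 2, so every set of its edges spans at least as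
many vertices, and Hall's theorem assigns to each crossing one of its two segments,
injectively. Letting the gaps shrink makes the ink tend to the total length.
-/

/-- Point at parameter `t ∈ [0,1]` along the segment with endpoints `s.1`, `s.2`. -/
noncomputable def segPt (s : (ℝ × ℝ) × (ℝ × ℝ)) (t : ℝ) : ℝ × ℝ :=
  (1 - t) • s.1 + t • s.2

/-- The set of points of a segment. -/
noncomputable def segSet (s : (ℝ × ℝ) × (ℝ × ℝ)) : Set (ℝ × ℝ) :=
  segPt s '' Set.Icc 0 1

/-- The parameters of the drawn part of a segment in a PED: a stub of fraction `a` at the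
first endpoint and a stub of fraction `b` at the second endpoint. -/
def stubParams (a b : ℝ) : Set ℝ := Set.Icc 0 a ∪ Set.Icc (1 - b) 1

/-- Two segments cross if they share a point interior to both. -/
noncomputable def segCross (s s' : (ℝ × ℝ) × (ℝ × ℝ)) : Prop :=
  ∃ t u : ℝ, t ∈ Set.Ioo (0 : ℝ) 1 ∧ u ∈ Set.Ioo (0 : ℝ) 1 ∧ segPt s t = segPt s' u

/-- A PED `(A, B)` (stub fractions at each endpoint of each segment) is valid if all stubs
are positive, total fractions are at most 1, and drawn parts of distinct segments only
meet at segment endpoints. -/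
def validPED {E : Type*} (seg : E → (ℝ × ℝ) × (ℝ × ℝ)) (A B : E → ℝ) : Prop :=
  (∀ e, 0 < A e ∧ 0 < B e ∧ A e + B e ≤ 1) ∧
  ∀ e f, e ≠ f →
    ∀ t ∈ stubParams (A e) (B e), ∀ u ∈ stubParams (A f) (B f),
      segPt (seg e) t = segPt (seg f) u → (t = 0 ∨ t = 1) ∧ (u = 0 ∨ u = 1)

open Finset Set

theorem Finset.exists_injective_mem_of_card_le_of_le_card {ι α : Type*} [Fintype ι]
    [DecidableEq α] (t : ι → Finset α) {m : ℕ} (hm : 0 < m) (ht : ∀ i, m ≤ #(t i))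
    (hdeg : ∀ a, #{i | a ∈ t i} ≤ m) :
    ∃ f : ι → α, Function.Injective f ∧ ∀ i, f i ∈ t i := by
  refine (all_card_le_biUnion_card_iff_exists_injective t).mp fun s => ?_
  have hcount : #s * m ≤ #(s.biUnion t) * m :=
    card_mul_le_card_mul (fun i a => a ∈ t i)
      (fun i hi => by
        rw [bipartiteAbove, filter_mem_eq_inter, inter_eq_right.mpr (subset_biUnion_of_mem t hi)]
        exact ht i)
      (fun a _ => (card_le_card (filter_subset_filter _ (subset_univ s))).trans (hdeg a))
  exact Nat.le_of_mul_le_mul_right hcount hm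

theorem SimpleGraph.exists_adj_choice_of_degree_le_two {V : Type*} [Fintype V] [DecidableEq V]
    (G : SimpleGraph V) [DecidableRel G.Adj] (h : ∀ v, G.degree v ≤ 2) :
    ∃ φ : V → V, ∀ u v, G.Adj u v → φ u = v ∨ φ v = u := by
  obtain ⟨g, hg, hgmem⟩ := exists_injective_mem_of_card_le_of_le_card
    (fun e : G.edgeSet => (e : Sym2 V).toFinset) two_pos
    (fun e => (Sym2.card_toFinset_of_not_isDiag _ (G.not_isDiag_of_mem_edgeSet e.2)).ge)
    (fun v => by
      refine (h v).trans' ?_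
      rw [← card_incidenceFinset_eq_degree]
      refine card_le_card_of_injOn Subtype.val (fun e he => ?_) Subtype.val_injective.injOn
      simp only [coe_filter, Finset.mem_univ, true_and, Set.mem_ofPred_eq, Sym2.mem_toFinset] at he
      exact (mem_incidenceFinset _ _ _).mpr ⟨e.2, he⟩)
  classical
  -- each vertex picks the other endpoint of the edge (if any) that Hall assigned to it
  let φ u := if hu : ∃ v, ∃ huv : G.Adj u v, g ⟨s(u, v), huv⟩ = u then hu.choose else u
  have hφ : ∀ u v (huv : G.Adj u v), g ⟨s(u, v), huv⟩ = u → φ u = v := by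
    intro u v huv hgu
    have hu : ∃ v, ∃ huv : G.Adj u v, g ⟨s(u, v), huv⟩ = u := ⟨v, huv, hgu⟩
    obtain ⟨_, hchoose⟩ := hu.choose_spec
    simp only [φ, dif_pos hu]
    exact Sym2.congr_right.mp (congrArg Subtype.val (hg (hchoose.trans hgu.symm)))
  refine ⟨φ, fun u v huv => ?_⟩
  have hmem := hgmem ⟨s(u, v), huv⟩
  rw [Sym2.mem_toFinset, Sym2.mem_iff] at hmem
  rcases hmem with hgu | hgv
  · exact .inl (hφ u v huv hgu)
  · refine .inr (hφ v u huv.symm ?_)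
    exact (congrArg g (Subtype.ext Sym2.eq_swap)).trans hgv

lemma segPt_injective {s : (ℝ × ℝ) × (ℝ × ℝ)} (h : s.1 ≠ s.2) :
    Function.Injective (segPt s) := by
  intro t u htu
  have hdiff : segPt s t - segPt s u = (t - u) • (s.2 - s.1) := by
    unfold segPt; module
  rw [htu, sub_self, eq_comm, smul_eq_zero, sub_eq_zero, sub_eq_zero] at hdiff
  exact hdiff.resolve_right h.symm

lemma segPt_mem_segSet (s : (ℝ × ℝ) × (ℝ × ℝ)) {t : ℝ} (ht : t ∈ Icc (0 : ℝ) 1) :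
    segPt s t ∈ segSet s :=
  mem_image_of_mem _ ht

lemma eq_of_segPt_mem_segSet {s s' : (ℝ × ℝ) × (ℝ × ℝ)} (hs : s.1 ≠ s.2)
    (hss' : (segSet s ∩ segSet s').Subsingleton) {t t' : ℝ} (ht : t ∈ Icc (0 : ℝ) 1)
    (ht' : t' ∈ Icc (0 : ℝ) 1) (h : segPt s t ∈ segSet s') (h' : segPt s t' ∈ segSet s') :
    t = t' :=
  segPt_injective hs (hss' ⟨segPt_mem_segSet s ht, h⟩ ⟨segPt_mem_segSet s ht', h'⟩)

lemma segCross.symm {s s' : (ℝ × ℝ) × (ℝ × ℝ)} (h : segCross s s') : segCross s' s :=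
  let ⟨t, u, ht, hu, heq⟩ := h
  ⟨u, t, hu, ht, heq.symm⟩

open Classical in
noncomputable def crossParam (s s' : (ℝ × ℝ) × (ℝ × ℝ)) : ℝ :=
  if h : segCross s s' then h.choose else 1 / 2

lemma crossParam_mem_Ioo (s s' : (ℝ × ℝ) × (ℝ × ℝ)) : crossParam s s' ∈ Ioo (0 : ℝ) 1 := by
  unfold crossParam
  split_ifs with h
  · exact h.choose_spec.choose_spec.1
  · norm_num

lemma segPt_crossParam_mem_segSet {s s' : (ℝ × ℝ) × (ℝ × ℝ)} (h : segCross s s') :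
    segPt s (crossParam s s') ∈ segSet s' := by
  obtain ⟨u, -, hu, heq⟩ := h.choose_spec
  rw [crossParam, dif_pos h, heq]
  exact segPt_mem_segSet s' (Ioo_subset_Icc_self hu)

lemma mem_Icc_and_ne_of_mem_stubParams {τ δ t : ℝ} (hτ : τ ∈ Icc (0 : ℝ) 1) (hδ : 0 < δ)
    (ht : t ∈ stubParams (τ - δ) (1 - τ - δ)) : t ∈ Icc (0 : ℝ) 1 ∧ t ≠ τ := by
  obtain ⟨h0, h1⟩ := hτ
  rcases ht with ⟨ht0, ht1⟩ | ⟨ht0, ht1⟩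
  · exact ⟨⟨ht0, by linarith⟩, by linarith⟩
  · exact ⟨⟨by linarith, ht1⟩, by linarith⟩

lemma exists_gap_width {τ d ε : ℝ} (hτ : τ ∈ Ioo (0 : ℝ) 1) (hd : 0 ≤ d) (hε : 0 < ε) :
    ∃ δ, 0 < δ ∧ δ < τ ∧ δ < 1 - τ ∧ 2 * δ * d ≤ ε := by
  obtain ⟨h0, h1⟩ := hτ
  have hpos : 0 < min (min (τ / 2) ((1 - τ) / 2)) (ε / (2 * (d + 1))) :=
    lt_min (lt_min (by linarith) (by linarith)) (by positivity)
  set δ := min (min (τ / 2) ((1 - τ) / 2)) (ε / (2 * (d + 1)))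
  have hδτ : δ ≤ τ / 2 := (min_le_left _ _).trans (min_le_left _ _)
  have hδτ' : δ ≤ (1 - τ) / 2 := (min_le_left _ _).trans (min_le_right _ _)
  have hδε : δ * (2 * (d + 1)) ≤ ε := (le_div_iff₀ (by positivity)).mp (min_le_right _ _)
  exact ⟨δ, hpos, by linarith, by linarith, by nlinarith⟩

section Drawing

variable {E : Type*} (seg : E → (ℝ × ℝ) × (ℝ × ℝ))

def crossingGraph : SimpleGraph E where
  Adj e f := e ≠ f ∧ segCross (seg e) (seg f)
  symm := ⟨fun _ _ h => ⟨h.1.symm, h.2.symm⟩⟩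
  loopless := ⟨fun _ h => h.1 rfl⟩

lemma crossingGraph_degree_le [Fintype E] [DecidableRel (crossingGraph seg).Adj] {k : ℕ}
    (hk : ∀ e, {f | f ≠ e ∧ segCross (seg e) (seg f)}.ncard ≤ k) (e : E) :
    (crossingGraph seg).degree e ≤ k := by
  rw [← SimpleGraph.card_neighborSet_eq_degree, ← Nat.card_eq_fintype_card, Nat.card_coe_set_eq]
  convert hk e using 2
  ext f
  exact and_congr_left' ne_comm

/-- `τ e` is the parameter at which segment `e` is cut (the PED leaves a small gap around it);
every crossing pair must have one of its segments cut at a point of the other. -/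
def CutsCrossings (τ : E → ℝ) : Prop :=
  ∀ e f, e ≠ f → segCross (seg e) (seg f) →
    segPt (seg e) (τ e) ∈ segSet (seg f) ∨ segPt (seg f) (τ f) ∈ segSet (seg e)

lemma exists_cutsCrossings [Fintype E]
    (h2plane : ∀ e, {f | f ≠ e ∧ segCross (seg e) (seg f)}.ncard ≤ 2) :
    ∃ τ : E → ℝ, (∀ e, τ e ∈ Ioo (0 : ℝ) 1) ∧ CutsCrossings seg τ := by
  classical
  obtain ⟨φ, hφ⟩ := (crossingGraph seg).exists_adj_choice_of_degree_le_two
    (crossingGraph_degree_le seg h2plane)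
  refine ⟨fun e => crossParam (seg e) (seg (φ e)), fun e => crossParam_mem_Ioo _ _,
    fun e f hne hef => ?_⟩
  rcases hφ e f ⟨hne, hef⟩ with rfl | rfl
  · exact .inl (segPt_crossParam_mem_segSet hef)
  · exact .inr (segPt_crossParam_mem_segSet hef.symm)

lemma validPED_of_cutsCrossings (hnd : ∀ e, (seg e).1 ≠ (seg e).2)
    (hshare : ∀ e f, e ≠ f → (segSet (seg e) ∩ segSet (seg f)).Subsingleton)
    (hproper : ∀ e f, e ≠ f → ∀ t ∈ Icc (0:ℝ) 1, ∀ u ∈ Icc (0:ℝ) 1,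
      segPt (seg e) t = segPt (seg f) u →
        (t ∈ Ioo (0:ℝ) 1 ∧ u ∈ Ioo (0:ℝ) 1) ∨ ((t = 0 ∨ t = 1) ∧ (u = 0 ∨ u = 1)))
    {τ δ : E → ℝ} (hτ : CutsCrossings seg τ) (hδ : ∀ e, 0 < δ e ∧ δ e < τ e ∧ δ e < 1 - τ e) :
    validPED seg (fun e => τ e - δ e) (fun e => 1 - τ e - δ e) := by
  have hτI : ∀ e, τ e ∈ Icc (0 : ℝ) 1 := fun e => by
    obtain ⟨h0, h1, h2⟩ := hδ e
    constructor <;> linarith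
  refine ⟨fun e => ?_, fun e f hne t ht u hu heq => ?_⟩
  · obtain ⟨h0, h1, h2⟩ := hδ e
    exact ⟨by linarith, by linarith, by linarith⟩
  obtain ⟨htI, hte⟩ := mem_Icc_and_ne_of_mem_stubParams (hτI e) (hδ e).1 ht
  obtain ⟨huI, huf⟩ := mem_Icc_and_ne_of_mem_stubParams (hτI f) (hδ f).1 hu
  refine (hproper e f hne t htI u huI heq).resolve_left fun ⟨htIoo, huIoo⟩ => ?_
  have hte' : segPt (seg e) t ∈ segSet (seg f) := heq ▸ segPt_mem_segSet _ huI
  have huf' : segPt (seg f) u ∈ segSet (seg e) := heq ▸ segPt_mem_segSet _ htI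
  -- the crossing point is the only common point of the two segments, and one of them is cut there
  rcases hτ e f hne ⟨t, u, htIoo, huIoo, heq⟩ with hcut | hcut
  · exact hte (eq_of_segPt_mem_segSet (hnd e) (hshare e f hne) htI (hτI e) hte' hcut)
  · refine huf (eq_of_segPt_mem_segSet (hnd f) ?_ huI (hτI f) huf' hcut)
    exact inter_comm (segSet (seg e)) _ ▸ hshare e f hne

lemma exists_validPED_ink_ge [Fintype E] (hnd : ∀ e, (seg e).1 ≠ (seg e).2)
    (hshare : ∀ e f, e ≠ f → (segSet (seg e) ∩ segSet (seg f)).Subsingleton)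
    (hproper : ∀ e f, e ≠ f → ∀ t ∈ Icc (0:ℝ) 1, ∀ u ∈ Icc (0:ℝ) 1,
      segPt (seg e) t = segPt (seg f) u →
        (t ∈ Ioo (0:ℝ) 1 ∧ u ∈ Ioo (0:ℝ) 1) ∨ ((t = 0 ∨ t = 1) ∧ (u = 0 ∨ u = 1)))
    (h2plane : ∀ e, {f | f ≠ e ∧ segCross (seg e) (seg f)}.ncard ≤ 2) {ε : ℝ} (hε : 0 < ε) :
    ∃ A B : E → ℝ, validPED seg A B ∧
      ∀ e, dist (seg e).1 (seg e).2 - ε ≤ (A e + B e) * dist (seg e).1 (seg e).2 := by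
  obtain ⟨τ, hτI, hτ⟩ := exists_cutsCrossings seg h2plane
  choose δ hδ using fun e => exists_gap_width (hτI e) (dist_nonneg (x := (seg e).1)) hε
  refine ⟨_, _, validPED_of_cutsCrossings seg hnd hshare hproper hτ
    fun e => ⟨(hδ e).1, (hδ e).2.1, (hδ e).2.2.1⟩, fun e => ?_⟩
  linarith [(hδ e).2.2.2]

lemma isLUB_ink_of_forall_exists_ink_ge [Fintype E]
    (h : ∀ ε > (0:ℝ), ∃ A B : E → ℝ, validPED seg A B ∧
      ∀ e, dist (seg e).1 (seg e).2 - ε ≤ (A e + B e) * dist (seg e).1 (seg e).2) :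
    IsLUB {I | ∃ A B : E → ℝ, validPED seg A B ∧
        I = ∑ e, (A e + B e) * dist (seg e).1 (seg e).2}
      (∑ e, dist (seg e).1 (seg e).2) := by
  refine ⟨?_, fun w hw => le_of_forall_pos_le_add fun ε hε => ?_⟩
  · rintro I ⟨A, B, hv, rfl⟩
    exact sum_le_sum fun e _ => mul_le_of_le_one_left dist_nonneg (hv.1 e).2.2
  set n : ℝ := (Fintype.card E : ℝ)
  obtain ⟨A, B, hv, hink⟩ := h (ε / (n + 1)) (by positivity)
  have hsum := sum_le_sum fun e (_ : e ∈ Finset.univ) => hink e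
  rw [sum_sub_distrib, sum_const, card_univ, nsmul_eq_mul] at hsum
  have hloss : n * (ε / (n + 1)) ≤ ε := by
    rw [mul_div_assoc', div_le_iff₀ (by positivity)]
    linarith
  linarith [hw ⟨A, B, hv, rfl⟩]

end Drawing

/-- Any 2-plane straight-line drawing admits, for every ε > 0, a partial edge
drawing in which every segment s is drawn with total stub length at least |s| − ε; hence
the supremum of ink over all PEDs of a 2-plane drawing equals the total length of all
segments.  Hypotheses: segments are nondegenerate, two distinct segments share at most one
point, and any such common point is either interior to both (a crossing) or an endpoint of
both; each segment crosses at most 2 others (2-plane). -/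
theorem stmt_4 {E : Type*} [Fintype E] (seg : E → (ℝ × ℝ) × (ℝ × ℝ))
    (hnd : ∀ e, (seg e).1 ≠ (seg e).2)
    (hshare : ∀ e f, e ≠ f → Set.Subsingleton (segSet (seg e) ∩ segSet (seg f)))
    (hproper : ∀ e f, e ≠ f → ∀ t ∈ Set.Icc (0:ℝ) 1, ∀ u ∈ Set.Icc (0:ℝ) 1,
      segPt (seg e) t = segPt (seg f) u →
        (t ∈ Set.Ioo (0:ℝ) 1 ∧ u ∈ Set.Ioo (0:ℝ) 1) ∨ ((t = 0 ∨ t = 1) ∧ (u = 0 ∨ u = 1)))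
    (h2plane : ∀ e, {f | f ≠ e ∧ segCross (seg e) (seg f)}.ncard ≤ 2) :
    (∀ ε > (0:ℝ), ∃ A B : E → ℝ, validPED seg A B ∧
      ∀ e, dist (seg e).1 (seg e).2 - ε ≤ (A e + B e) * dist (seg e).1 (seg e).2) ∧
    IsLUB {I | ∃ A B : E → ℝ, validPED seg A B ∧
        I = ∑ e, (A e + B e) * dist (seg e).1 (seg e).2}
      (∑ e, dist (seg e).1 (seg e).2) := by
  have hink := fun ε (hε : ε > 0) => exists_validPED_ink_ge seg hnd hshare hproper h2plane hε
  exact ⟨hink, isLUB_ink_of_forall_exists_ink_ge seg hink⟩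
end

section
/- Given consecutive values W_j(u) and W_{j+1}(u) in the tree dynamic program, if the neighbor v_j inducing stub length ℓ_j(u) is a child of u, then W_{j+1}(u) = W_j(u) + (ℓ_{j+1}(u) − ℓ_j(u)) − long(v_j) + short(v_j); if v_j is the parent of u, then W_{j+1}(u) = W_j(u) + (ℓ_{j+1}(u) − ℓ_j(u)). Consequently all values W_0(u),...,W_{δ_u}(u) can be computed from the children's values using O(δ_u) arithmetic operations. -/
/-!
Moving from stub `j` to stub `j + 1` of `u` changes exactly one term of the recurrence for
`W u ·`: the crossing with `v_j` becomes covered. If `v_j` is a child, its summand switches from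
`long v_j` to `short v_j u`; if `v_j` is the parent it has no summand at all, since a parent of
`u` is never a child of `u` (depth strictly increases along parent edges).
-/

open Finset

lemma Finset.sum_ite_eq_sub_add_of_forall_ne {ι M : Type*} [AddCommGroup M]
    {s : Finset ι} {p q : ι → Prop} [DecidablePred p] [DecidablePred q] {f g : ι → M} {a : ι}
    (ha : a ∈ s) (hpq : ∀ x ∈ s, x ≠ a → (p x ↔ q x)) (hpa : ¬ p a) (hqa : q a) :
    ∑ x ∈ s, (if q x then f x else g x) = ∑ x ∈ s, (if p x then f x else g x) - g a + f a := by
  classical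
  have hrest : ∑ x ∈ s.erase a, (if q x then f x else g x)
      = ∑ x ∈ s.erase a, (if p x then f x else g x) :=
    sum_congr rfl fun x hx => if_congr (hpq x (mem_of_mem_erase hx) (ne_of_mem_erase hx)).symm rfl rfl
  rw [← add_sum_erase _ _ ha, ← add_sum_erase _ _ ha, hrest, if_pos hqa, if_neg hpa]
  abel

lemma Finset.sum_ite_congr_of_forall_ne {ι M : Type*} [AddCommMonoid M]
    {s : Finset ι} {p q : ι → Prop} [DecidablePred p] [DecidablePred q] {f g : ι → M} {a : ι}
    (ha : a ∉ s) (hpq : ∀ x ∈ s, x ≠ a → (p x ↔ q x)) :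
    ∑ x ∈ s, (if q x then f x else g x) = ∑ x ∈ s, (if p x then f x else g x) :=
  sum_congr rfl fun x hx => if_congr (hpq x hx (ne_of_mem_of_not_mem hx ha)).symm rfl rfl

lemma parent_ne_of_parent_eq {V : Type*} {r : V} {parent : V → V} {depth : V → ℕ}
    (hroot : parent r = r) (hdepth : ∀ v, v ≠ r → depth (parent v) + 1 = depth v)
    {u v : V} (hp : parent u = v) (hne : u ≠ v) : parent v ≠ u := by
  intro hq
  have hur : u ≠ r := by rintro rfl; exact hne (hroot ▸ hp)
  have hvr : v ≠ r := by rintro rfl; exact hur (hroot ▸ hq).symm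
  have hdu := hdepth u hur
  have hdv := hdepth v hvr
  rw [hp] at hdu
  rw [hq] at hdv
  omega

theorem stmt_6_general {V : Type*} [Fintype V] [DecidableEq V]
    (r : V) (parent : V → V) (depth : V → ℕ)
    (hroot : parent r = r)
    (hdepth : ∀ v, v ≠ r → depth (parent v) + 1 = depth v)
    (cross : V → V → Prop)
    (hcross : ∀ u v, cross u v ↔ u ≠ v ∧ (parent u = v ∨ parent v = u))
    (δ : V → ℕ) (ℓ : V → ℕ → ℝ)
    (covers : V → ℕ → V → Prop) [∀ u i v, Decidable (covers u i v)]
    (W : V → ℕ → ℝ)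
    (short : V → V → ℝ) (long : V → ℝ)
    (hW : ∀ u, ∀ i ≤ δ u, W u i = ℓ u i +
      ∑ v ∈ Finset.univ.filter (fun v => parent v = u ∧ v ≠ u),
        (if covers u i v then short v u else long v))
    (u : V) (j : ℕ) (hj : 1 ≤ j) (hj' : j + 1 ≤ δ u)
    (vj : V)
    (hthr : ∀ i, covers u i vj ↔ (i = 0 ∨ (j + 1 ≤ i ∧ i ≤ δ u)))
    (hother : ∀ v, cross u v → v ≠ vj → (covers u j v ↔ covers u (j + 1) v)) :
    (parent vj = u → vj ≠ u →
      W u (j + 1) = W u j + (ℓ u (j + 1) - ℓ u j) - long vj + short vj u) ∧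
    (parent u = vj → u ≠ vj →
      W u (j + 1) = W u j + (ℓ u (j + 1) - ℓ u j)) := by
  have hcov_succ : covers u (j + 1) vj := (hthr _).2 (Or.inr ⟨le_rfl, hj'⟩)
  have hncov : ¬ covers u j vj := by rw [hthr]; omega
  have hchildren : ∀ v ∈ univ.filter (fun v => parent v = u ∧ v ≠ u), v ≠ vj →
      (covers u j v ↔ covers u (j + 1) v) := fun v hv hne =>
    hother v ((hcross u v).2 ⟨(mem_filter.1 hv).2.2.symm, .inr (mem_filter.1 hv).2.1⟩) hne
  rw [hW u (j + 1) hj', hW u j (by omega)]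
  constructor
  · intro hp hne
    rw [sum_ite_eq_sub_add_of_forall_ne (by simp [hp, hne]) hchildren hncov hcov_succ]
    ring
  · intro hp hne
    have hvj : vj ∉ univ.filter (fun v => parent v = u ∧ v ≠ u) := by
      simpa using fun h => absurd h (parent_ne_of_parent_eq hroot hdepth hp hne)
    rw [sum_ite_congr_of_forall_ne hvj hchildren]
    ring

/-- incremental computation of consecutive values in the tree dynamic
program for MaxSPED.

Setting as in the tree DP: `C` is a rooted tree intersection graph (root `r`, parent map);
vertex `u` has candidate stub lengths `ℓ u 0` (full segment) and `ℓ u 1 ≤ … ≤ ℓ u (δ u)`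
sorted increasingly; `covers u i v` says stub `i` of `u` covers the crossing point with
`v`; `W` satisfies the recurrence with `short`/`long` as in the DP.  Let `vj` be the
neighbor of `u` inducing the stub length `ℓ u j` (so stub `i` of `u` covers the crossing
with `vj` iff `i = 0` or `j + 1 ≤ i ≤ δ u`), and suppose crossing coverage of the other
neighbors is unchanged between stubs `j` and `j+1`.  Then:
if `vj` is a child of `u`, `W u (j+1) = W u j + (ℓ u (j+1) - ℓ u j) - long vj + short vj u`;
if `vj` is the parent of `u`, `W u (j+1) = W u j + (ℓ u (j+1) - ℓ u j)`.
(Consequently all values `W u 0, …, W u (δ u)` can be obtained from the children's values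
with O(δ u) arithmetic operations.) -/
theorem stmt_6 {V : Type*} [Fintype V] [DecidableEq V]
    (r : V) (parent : V → V) (depth : V → ℕ)
    (hroot : parent r = r)
    (hdepth : ∀ v, v ≠ r → depth (parent v) + 1 = depth v)
    (cross : V → V → Prop)
    (hcross : ∀ u v, cross u v ↔ u ≠ v ∧ (parent u = v ∨ parent v = u))
    (δ : V → ℕ) (ℓ : V → ℕ → ℝ)
    (covers : V → ℕ → V → Prop) [∀ u i v, Decidable (covers u i v)]
    (W : V → ℕ → ℝ)
    (short : V → V → ℝ) (long : V → ℝ)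
    (hshort : ∀ v u, short v u = sSup {x | ∃ j, 1 ≤ j ∧ j ≤ δ v ∧ ¬ covers v j u ∧ x = W v j})
    (hlong : ∀ v, long v = sSup {x | ∃ j ≤ δ v, x = W v j})
    (hW : ∀ u, ∀ i ≤ δ u, W u i = ℓ u i +
      ∑ v ∈ Finset.univ.filter (fun v => parent v = u ∧ v ≠ u),
        (if covers u i v then short v u else long v))
    (u : V) (j : ℕ) (hj : 1 ≤ j) (hj' : j + 1 ≤ δ u)
    (vj : V) (hvj : cross u vj)
    (hthr : ∀ i, covers u i vj ↔ (i = 0 ∨ (j + 1 ≤ i ∧ i ≤ δ u)))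
    (hother : ∀ v, cross u v → v ≠ vj → (covers u j v ↔ covers u (j + 1) v)) :
    (parent vj = u → vj ≠ u →
      W u (j + 1) = W u j + (ℓ u (j + 1) - ℓ u j) - long vj + short vj u) ∧
    (parent u = vj → u ≠ vj →
      W u (j + 1) = W u j + (ℓ u (j + 1) - ℓ u j)) :=
  stmt_6_general r parent depth hroot hdepth cross hcross δ ℓ covers W short long hW u j hj hj' vj
    hthr hother
end

section
/- Let C be a graph with tree decomposition (T, X), let S(V') be the set of candidate stub assignments for vertices in V', and call a stub set valid if it selects exactly one stub length per vertex and no two selected stubs intersect. Fix a node t ∈ T and a subset S ⊆ S(X_t). If S_1 and S_2 are two valid maximum-ink stub sets on all of V(C) with S_1 ∩ S(X_t) = S_2 ∩ S(X_t) = S, then I(S_1 ∩ S(V_t)) = I(S_2 ∩ S(V_t)), where V_t is the union of bags in the subtree of T rooted at t and I denotes total ink. -/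
/-!
Splice the two solutions along the separator `X t`: take `c₁` on `V_t` and `c₂` elsewhere.
Every edge of `C` leaving `V_t` has its inner endpoint in `X t`, where `c₁ = c₂`, so each
edge sees only `c₁` or only `c₂` and the spliced stub set is still valid. Its ink is
`I(c₁|V_t) + I(c₂|V ∖ V_t)`, and maximality of `c₂` gives `I(c₁|V_t) ≤ I(c₂|V_t)`;
by symmetry the two are equal.
-/

open scoped Classical

/-- A tree decomposition of a graph `C`: a tree `T` with bags `X`, covering all vertices
and edges of `C`, such that the occurrences of each vertex form a connected subtree. -/
structure TreeDecompOf {V ι : Type*} (C : SimpleGraph V) (T : SimpleGraph ι)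
    (X : ι → Set V) : Prop where
  tree : T.IsTree
  covers_vertex : ∀ v, ∃ t, v ∈ X t
  covers_edge : ∀ ⦃u v⦄, C.Adj u v → ∃ t, u ∈ X t ∧ v ∈ X t
  connected : ∀ v t₁ t₂ t₃, v ∈ X t₁ → v ∈ X t₃ →
    ∀ p : T.Walk t₁ t₃, p.IsPath → t₂ ∈ p.support → v ∈ X t₂

/-- `t'` is a descendant of `t` in the tree `T` rooted at `r`
(i.e. `t` lies on the path from `r` to `t'`). -/
def DescOf {ι : Type*} (T : SimpleGraph ι) (r t t' : ι) : Prop :=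
  ∃ p : T.Walk r t', p.IsPath ∧ t ∈ p.support

/-- `V_t`: the union of the bags at `t` and its descendants. -/
def bagsBelow {V ι : Type*} (T : SimpleGraph ι) (X : ι → Set V) (r t : ι) : Set V :=
  {v | ∃ t', DescOf T r t t' ∧ v ∈ X t'}

open Finset

namespace SimpleGraph.IsTree

variable {ι : Type*} {T : SimpleGraph ι}

theorem exists_path_mem_support_of_descOf_of_not_descOf (hT : T.IsTree) {r t t₀ t' : ι}
    (ht' : DescOf T r t t') (ht₀ : ¬ DescOf T r t t₀) :
    ∃ q : T.Walk t₀ t', q.IsPath ∧ t ∈ q.support := by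
  obtain ⟨p', hp', ht⟩ := ht'
  obtain ⟨w⟩ := hT.connected.preconnected r t₀
  set p₀ := w.bypass
  have hp₀ : p₀.IsPath := w.bypass_isPath
  set q := (p₀.reverse.append p').bypass
  -- `p₀ ++ q` bypasses to the unique `r`–`t'` path `p'`, which passes through `t`.
  have hp'_eq : p' = (p₀.append q).bypass := congrArg Subtype.val <|
    (hT.isAcyclic.subsingleton_path r t').elim ⟨p', hp'⟩ ⟨_, (p₀.append q).bypass_isPath⟩
  have ht_mem : t ∈ (p₀.append q).support :=
    Walk.support_bypass_subset_support _ (hp'_eq ▸ ht)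
  rw [Walk.mem_support_append_iff] at ht_mem
  exact ⟨q, Walk.bypass_isPath _, ht_mem.resolve_left fun h => ht₀ ⟨p₀, hp₀, h⟩⟩

end SimpleGraph.IsTree

namespace TreeDecompOf

variable {V ι : Type*} {C : SimpleGraph V} {T : SimpleGraph ι} {X : ι → Set V}

theorem mem_bag_of_mem_bagsBelow_of_not_descOf (td : TreeDecompOf C T X) {r t t₀ : ι} {u : V}
    (hu : u ∈ bagsBelow T X r t) (hu₀ : u ∈ X t₀) (ht₀ : ¬ DescOf T r t t₀) : u ∈ X t := by
  obtain ⟨t', ht', hu'⟩ := hu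
  obtain ⟨q, hq, ht⟩ := td.tree.exists_path_mem_support_of_descOf_of_not_descOf ht' ht₀
  exact td.connected u t₀ t t' hu₀ hu' q hq ht

theorem mem_bag_of_adj_of_mem_bagsBelow (td : TreeDecompOf C T X) {r t : ι} {u v : V}
    (huv : C.Adj u v) (hu : u ∈ bagsBelow T X r t) (hv : v ∉ bagsBelow T X r t) : u ∈ X t := by
  obtain ⟨t₀, hu₀, hv₀⟩ := td.covers_edge huv
  exact td.mem_bag_of_mem_bagsBelow_of_not_descOf hu hu₀ fun ht₀ => hv ⟨t₀, ht₀, hv₀⟩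

end TreeDecompOf

section StubSets

variable {V : Type*} (cand : V → Finset ℝ) (meets : V → ℝ → V → ℝ → Prop)

def IsValidStubSet (c : V → ℝ) : Prop :=
  (∀ u, c u ∈ cand u) ∧ ∀ u v, u ≠ v → ¬ meets u (c u) v (c v)

variable {cand meets} [DecidableEq V]

theorem Finset.piecewise_eq_or_eq_of_adj {C : SimpleGraph V} {s : Finset V} {S : Set V}
    (hS : ∀ u v, C.Adj u v → u ∈ s → v ∉ s → u ∈ S) {c₁ c₂ : V → ℝ}
    (hagree : ∀ u ∈ S, c₁ u = c₂ u) {u v : V} (huv : C.Adj u v) :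
    (s.piecewise c₁ c₂ u = c₁ u ∧ s.piecewise c₁ c₂ v = c₁ v) ∨
      (s.piecewise c₁ c₂ u = c₂ u ∧ s.piecewise c₁ c₂ v = c₂ v) := by
  by_cases hu : u ∈ s <;> by_cases hv : v ∈ s
  · simp [hu, hv]
  · simp [hu, hv, hagree u (hS u v huv hu hv)]
  · simp [hu, hv, hagree v (hS v u huv.symm hv hu)]
  · simp [hu, hv]

theorem IsValidStubSet.piecewise {C : SimpleGraph V}
    (meets_adj : ∀ u a v b, meets u a v b → C.Adj u v) {s : Finset V} {S : Set V}
    (hS : ∀ u v, C.Adj u v → u ∈ s → v ∉ s → u ∈ S) {c₁ c₂ : V → ℝ}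
    (h₁ : IsValidStubSet cand meets c₁) (h₂ : IsValidStubSet cand meets c₂)
    (hagree : ∀ u ∈ S, c₁ u = c₂ u) : IsValidStubSet cand meets (s.piecewise c₁ c₂) := by
  refine ⟨fun u => s.piecewise_cases c₁ c₂ (· ∈ cand u) (h₁.1 u) (h₂.1 u), fun u v huv hm => ?_⟩
  rcases Finset.piecewise_eq_or_eq_of_adj hS hagree (meets_adj _ _ _ _ hm) with
    ⟨hu, hv⟩ | ⟨hu, hv⟩
  · exact h₁.2 u v huv (hu ▸ hv ▸ hm)
  · exact h₂.2 u v huv (hv ▸ hu ▸ hm)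

variable [Fintype V]

theorem sum_le_sum_of_isValidStubSet_of_eqOn_separator {C : SimpleGraph V}
    (meets_adj : ∀ u a v b, meets u a v b → C.Adj u v) {s : Finset V} {S : Set V}
    (hS : ∀ u v, C.Adj u v → u ∈ s → v ∉ s → u ∈ S) {c₁ c₂ : V → ℝ}
    (h₁ : IsValidStubSet cand meets c₁) (h₂ : IsValidStubSet cand meets c₂)
    (hmax₂ : ∀ c, IsValidStubSet cand meets c → ∑ u, c u ≤ ∑ u, c₂ u)
    (hagree : ∀ u ∈ S, c₁ u = c₂ u) : ∑ u ∈ s, c₁ u ≤ ∑ u ∈ s, c₂ u := by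
  have hspliced := hmax₂ _ (h₁.piecewise meets_adj hS h₂ hagree)
  rw [sum_piecewise, univ_inter, ← compl_eq_univ_sdiff, ← sum_add_sum_compl s c₂] at hspliced
  exact le_of_add_le_add_right hspliced

theorem sum_eq_sum_of_isValidStubSet_of_eqOn_separator {C : SimpleGraph V}
    (meets_adj : ∀ u a v b, meets u a v b → C.Adj u v) {s : Finset V} {S : Set V}
    (hS : ∀ u v, C.Adj u v → u ∈ s → v ∉ s → u ∈ S) {c₁ c₂ : V → ℝ}
    (h₁ : IsValidStubSet cand meets c₁) (h₂ : IsValidStubSet cand meets c₂)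
    (hmax₁ : ∀ c, IsValidStubSet cand meets c → ∑ u, c u ≤ ∑ u, c₁ u)
    (hmax₂ : ∀ c, IsValidStubSet cand meets c → ∑ u, c u ≤ ∑ u, c₂ u)
    (hagree : ∀ u ∈ S, c₁ u = c₂ u) : ∑ u ∈ s, c₁ u = ∑ u ∈ s, c₂ u :=
  le_antisymm (sum_le_sum_of_isValidStubSet_of_eqOn_separator meets_adj hS h₁ h₂ hmax₂ hagree)
    (sum_le_sum_of_isValidStubSet_of_eqOn_separator meets_adj hS h₂ h₁ hmax₁
      fun u hu => (hagree u hu).symm)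

end StubSets

theorem stmt_7_general {V ι : Type*} [Fintype V] (C : SimpleGraph V)
    (T : SimpleGraph ι) (X : ι → Set V) (td : TreeDecompOf C T X) (r : ι)
    (cand : V → Finset ℝ)
    (meets : V → ℝ → V → ℝ → Prop)
    (meets_adj : ∀ u a v b, meets u a v b → C.Adj u v)
    (valid : (V → ℝ) → Prop)
    (hvalid : ∀ c, valid c ↔
      (∀ u, c u ∈ cand u) ∧ ∀ u v, u ≠ v → ¬ meets u (c u) v (c v))
    (t : ι) (c₁ c₂ : V → ℝ)
    (h₁ : valid c₁) (h₂ : valid c₂)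
    (hmax₁ : ∀ c, valid c → ∑ u, c u ≤ ∑ u, c₁ u)
    (hmax₂ : ∀ c, valid c → ∑ u, c u ≤ ∑ u, c₂ u)
    (hagree : ∀ u ∈ X t, c₁ u = c₂ u) :
    ∑ u ∈ Finset.univ.filter (fun u => u ∈ bagsBelow T X r t), c₁ u =
      ∑ u ∈ Finset.univ.filter (fun u => u ∈ bagsBelow T X r t), c₂ u := by
  have hvalid' : valid = IsValidStubSet cand meets := funext fun c => propext (hvalid c)
  subst hvalid'
  have hsep : ∀ u v, C.Adj u v → u ∈ univ.filter (· ∈ bagsBelow T X r t) →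
      v ∉ univ.filter (· ∈ bagsBelow T X r t) → u ∈ X t := by
    simp only [mem_filter, mem_univ, true_and]
    exact fun u v huv hu hv => td.mem_bag_of_adj_of_mem_bagsBelow huv hu hv
  exact sum_eq_sum_of_isValidStubSet_of_eqOn_separator meets_adj hsep h₁ h₂ hmax₁ hmax₂ hagree

/-- Lemma 1:  Let `C` be the intersection graph, with candidate stub
lengths `cand u` for each vertex and an abstract intersection relation `meets` between
stubs that can hold only along edges of `C`.  A (full) valid stub set picks one candidate
per vertex so that no two picked stubs intersect; its ink is the sum of picked lengths.
Given a tree decomposition `(T, X)` of `C` rooted at `r`, a node `t`, and two maximum-ink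
valid stub sets `c₁, c₂` agreeing on the bag `X t`, the ink of their restrictions to `V_t`
coincide. -/
theorem stmt_7 {V ι : Type*} [Fintype V] (C : SimpleGraph V)
    (T : SimpleGraph ι) (X : ι → Set V) (td : TreeDecompOf C T X) (r : ι)
    (cand : V → Finset ℝ)
    (meets : V → ℝ → V → ℝ → Prop)
    (meets_symm : ∀ u a v b, meets u a v b → meets v b u a)
    (meets_adj : ∀ u a v b, meets u a v b → C.Adj u v)
    (valid : (V → ℝ) → Prop)
    (hvalid : ∀ c, valid c ↔
      (∀ u, c u ∈ cand u) ∧ ∀ u v, u ≠ v → ¬ meets u (c u) v (c v))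
    (t : ι) (c₁ c₂ : V → ℝ)
    (h₁ : valid c₁) (h₂ : valid c₂)
    (hmax₁ : ∀ c, valid c → ∑ u, c u ≤ ∑ u, c₁ u)
    (hmax₂ : ∀ c, valid c → ∑ u, c u ≤ ∑ u, c₂ u)
    (hagree : ∀ u ∈ X t, c₁ u = c₂ u) :
    ∑ u ∈ Finset.univ.filter (fun u => u ∈ bagsBelow T X r t), c₁ u =
      ∑ u ∈ Finset.univ.filter (fun u => u ∈ bagsBelow T X r t), c₂ u :=
  stmt_7_general C T X td r cand meets meets_adj valid hvalid t c₁ c₂ h₁ h₂ hmax₁ hmax₂ hagree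
end

section
/- In the bounded-treewidth dynamic program for maximum-ink SPED, for an introduce node t of a nice tree decomposition with child t' and introduced vertex v, and any valid stub set S ⊆ S(X_t) containing (v, ℓ_i(v)), the table entry satisfies W(t, S) = W(t', S \ {(v, ℓ_i(v))}) + ℓ_i(v), where W(t, S) is the maximum ink of a valid stub set Ŝ with S ⊆ Ŝ ⊆ S(V_t) and Ŝ ∩ S(X_t) = S (and −∞ if none exists). -/
/-!
Adding the stub `(v, ℓ)` is a bijection from the completions of `S \ {(v, ℓ)}` at `t'` onto
the completions of `S` at `t`. The new stub cannot meet a stub of a forgotten vertex of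
`V_{t'} \ X_{t'}` by separation, and on the bag `X_{t'}` the completion agrees with `S`, which
is already pairwise non-intersecting. The bijection raises the ink by exactly `ℓ`, and adding a
real constant commutes with `sSup` in `EReal`, also for the empty supremum `⊥`.
-/

open scoped Classical

/-- The stub pairs `(u, ℓ)` with `u ∈ A` and `ℓ` a candidate stub length of `u`. -/
noncomputable def stubPairs {V : Type*} (cand : V → Finset ℝ) (A : Finset V) :
    Finset (V × ℝ) :=
  A.biUnion fun u => (cand u).image fun l => (u, l)

/-- A stub set over the vertex set `A` is valid if it contains exactly one candidate stub
pair per vertex of `A` and no two of its pairs intersect. -/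
def ValidStubSet {V : Type*} (cand : V → Finset ℝ) (meets : V → ℝ → V → ℝ → Prop)
    (A : Finset V) (S : Finset (V × ℝ)) : Prop :=
  S ⊆ stubPairs cand A ∧ (∀ u ∈ A, ∃! l : ℝ, (u, l) ∈ S) ∧
  ∀ p ∈ S, ∀ q ∈ S, p.1 ≠ q.1 → ¬ meets p.1 p.2 q.1 q.2

/-- The ink of a stub set: the total stub length. -/
noncomputable def inkOf {V : Type*} (S : Finset (V × ℝ)) : ℝ := ∑ p ∈ S, p.2

/-- The dynamic-programming table: `Wtab cand meets X Vt S` is the maximum ink of a valid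
stub set `T` on `Vt` with `S ⊆ T` and `T ∩ S(X) = S` (and `⊥ = -∞` if none exists). -/
noncomputable def Wtab {V : Type*} (cand : V → Finset ℝ)
    (meets : V → ℝ → V → ℝ → Prop) (X Vt : Finset V) (S : Finset (V × ℝ)) : EReal :=
  sSup {x : EReal | ∃ T : Finset (V × ℝ), ValidStubSet cand meets Vt T ∧
    S ⊆ T ∧ T ∩ stubPairs cand X = S ∧ x = (inkOf T : EReal)}

section StubSets

variable {V : Type*} {cand : V → Finset ℝ} {meets : V → ℝ → V → ℝ → Prop}

@[simp]
lemma mem_stubPairs {A : Finset V} {u : V} {a : ℝ} :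
    (u, a) ∈ stubPairs cand A ↔ u ∈ A ∧ a ∈ cand u := by
  simp [stubPairs]

lemma inkOf_insert {T : Finset (V × ℝ)} {p : V × ℝ} (hp : p ∉ T) :
    inkOf (insert p T) = inkOf T + p.2 := by
  rw [inkOf, inkOf, Finset.sum_insert hp, add_comm]

namespace ValidStubSet

variable {A : Finset V} {T : Finset (V × ℝ)}

lemma mem_stubPairs (hT : ValidStubSet cand meets A T) {p : V × ℝ} (hp : p ∈ T) :
    p.1 ∈ A ∧ p.2 ∈ cand p.1 :=
  _root_.mem_stubPairs.mp (hT.1 hp)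

lemma eq_of_mem (hT : ValidStubSet cand meets A T) {u : V} {a b : ℝ} (hu : u ∈ A)
    (ha : (u, a) ∈ T) (hb : (u, b) ∈ T) : a = b :=
  (hT.2.1 u hu).unique ha hb

lemma erase_stub {v : V} (hT : ValidStubSet cand meets (insert v A) T) (hv : v ∉ A) {l : ℝ}
    (hl : (v, l) ∈ T) : ValidStubSet cand meets A (T.erase (v, l)) := by
  refine ⟨fun ⟨u, a⟩ hp => ?_, fun u hu => ?_, fun p hp q hq =>
    hT.2.2 p (Finset.mem_of_mem_erase hp) q (Finset.mem_of_mem_erase hq)⟩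
  · obtain ⟨hne, hpT⟩ := Finset.mem_erase.mp hp
    obtain ⟨hu, ha⟩ := hT.mem_stubPairs hpT
    have huv : u ≠ v := by
      rintro rfl
      exact hne (by rw [hT.eq_of_mem hu hpT hl])
    exact _root_.mem_stubPairs.mpr ⟨(Finset.mem_insert.mp hu).resolve_left huv, ha⟩
  · have huv : u ≠ v := fun h => hv (h ▸ hu)
    obtain ⟨b, hb, huniq⟩ := hT.2.1 u (Finset.mem_insert_of_mem hu)
    exact ⟨b, Finset.mem_erase.mpr ⟨by simp [huv], hb⟩,
      fun a ha => huniq a (Finset.mem_of_mem_erase ha)⟩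

lemma insert_stub {v : V} (hT : ValidStubSet cand meets A T) (hv : v ∉ A) {l : ℝ}
    (hl : l ∈ cand v) (hsymm : ∀ u a w b, meets u a w b → meets w b u a)
    (hfree : ∀ p ∈ T, ¬ meets v l p.1 p.2) :
    ValidStubSet cand meets (insert v A) (insert (v, l) T) := by
  have hT_ne : ∀ p ∈ T, p.1 ≠ v := fun p hp h => hv (h ▸ (hT.mem_stubPairs hp).1)
  refine ⟨fun ⟨u, a⟩ hp => ?_, fun u hu => ?_, fun p hp q hq hpq => ?_⟩
  · rcases Finset.mem_insert.mp hp with h | h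
    · obtain ⟨rfl, rfl⟩ := Prod.mk.inj h
      simp [hl]
    · obtain ⟨hu, ha⟩ := hT.mem_stubPairs h
      simp [hu, ha]
  · rcases Finset.mem_insert.mp hu with rfl | hu
    · refine ⟨l, Finset.mem_insert_self _ _, fun a ha => ?_⟩
      rcases Finset.mem_insert.mp ha with h | h
      · exact (Prod.mk.inj h).2
      · exact absurd rfl (hT_ne _ h)
    · obtain ⟨b, hb, huniq⟩ := hT.2.1 u hu
      refine ⟨b, Finset.mem_insert_of_mem hb, fun a ha => ?_⟩
      rcases Finset.mem_insert.mp ha with h | h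
      · exact absurd (Prod.mk.inj h).1 (fun h => hv (h ▸ hu))
      · exact huniq a h
  · rcases Finset.mem_insert.mp hp with rfl | hp <;>
      rcases Finset.mem_insert.mp hq with rfl | hq
    · exact absurd rfl hpq
    · exact hfree q hq
    · exact fun h => hfree p hp (hsymm _ _ _ _ h)
    · exact hT.2.2 p hp q hq hpq

lemma inter_stubPairs_insert (hT : ValidStubSet cand meets A T) {X : Finset V} {v : V}
    (hv : v ∈ A) {l : ℝ} (hl : (v, l) ∈ T) :
    T ∩ stubPairs cand (insert v X) = insert (v, l) (T ∩ stubPairs cand X) := by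
  have hlc : l ∈ cand v := (hT.mem_stubPairs hl).2
  ext ⟨u, a⟩
  by_cases huv : u = v
  · subst huv
    constructor
    · intro h
      rw [hT.eq_of_mem hv (Finset.mem_inter.mp h).1 hl]
      exact Finset.mem_insert_self _ _
    · intro h
      rcases Finset.mem_insert.mp h with h | h
      · obtain ⟨-, rfl⟩ := Prod.mk.inj h
        simp [hl, hlc]
      · obtain ⟨h, hX⟩ := Finset.mem_inter.mp h
        simp_all
  · simp [huv]

end ValidStubSet

lemma notMem_stubPairs {X : Finset V} {v : V} (hv : v ∉ X) (l : ℝ) :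
    (v, l) ∉ stubPairs cand X := by
  simp [hv]

end StubSets

section Table

variable {V : Type*} (cand : V → Finset ℝ) (meets : V → ℝ → V → ℝ → Prop)

/-- The stub sets `Ŝ` over which the table entry `W(t, S)` maximises the ink. -/
def IsCompletion (X Vt : Finset V) (S T : Finset (V × ℝ)) : Prop :=
  ValidStubSet cand meets Vt T ∧ S ⊆ T ∧ T ∩ stubPairs cand X = S

lemma Wtab_eq_sSup_image (X Vt : Finset V) (S : Finset (V × ℝ)) :
    Wtab cand meets X Vt S =
      sSup ((fun T => (inkOf T : EReal)) '' {T | IsCompletion cand meets X Vt S T}) := by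
  simp only [Wtab, IsCompletion, Set.image, Set.mem_ofPred_eq, and_assoc, eq_comm]

lemma completions_introduce (hsymm : ∀ u a w b, meets u a w b → meets w b u a)
    {X' V' : Finset V} (hXV : X' ⊆ V') {v : V} (hv : v ∉ V')
    (hsep : ∀ u ∈ V' \ X', ∀ a b : ℝ, ¬ meets v a u b)
    {S : Finset (V × ℝ)} (hS : ValidStubSet cand meets (insert v X') S)
    {l : ℝ} (hl : (v, l) ∈ S) :
    {T | IsCompletion cand meets (insert v X') (insert v V') S T} =
      insert (v, l) '' {T | IsCompletion cand meets X' V' (S.erase (v, l)) T} := by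
  have hvX : v ∉ X' := fun h => hv (hXV h)
  ext T
  constructor
  · rintro ⟨hT, hST, hTX⟩
    have hlT : (v, l) ∈ T := hST hl
    refine ⟨T.erase (v, l), ⟨hT.erase_stub hv hlT, Finset.erase_subset_erase _ hST, ?_⟩,
      Finset.insert_erase hlT⟩
    rw [hT.inter_stubPairs_insert (Finset.mem_insert_self _ _) hlT] at hTX
    rw [← hTX, Finset.erase_insert (fun h => notMem_stubPairs hvX l (Finset.mem_inter.mp h).2),
      Finset.erase_inter, Finset.erase_eq_of_notMem
        (fun h => notMem_stubPairs hvX l (Finset.mem_inter.mp h).2)]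
  · rintro ⟨T', ⟨hT', hST', hT'X⟩, rfl⟩
    have hfree : ∀ p ∈ T', ¬ meets v l p.1 p.2 := by
      intro p hp
      obtain ⟨hu, ha⟩ := hT'.mem_stubPairs hp
      by_cases huX : p.1 ∈ X'
      · have hpS : p ∈ S.erase (v, l) := by
          rw [← hT'X]
          exact Finset.mem_inter.mpr ⟨hp, mem_stubPairs.mpr ⟨huX, ha⟩⟩
        exact hS.2.2 (v, l) hl p (Finset.mem_of_mem_erase hpS)
          fun h : v = p.1 => hv (h ▸ hu)
      · exact hsep p.1 (Finset.mem_sdiff.mpr ⟨hu, huX⟩) l p.2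
    have hT := hT'.insert_stub hv (hS.mem_stubPairs hl).2 hsymm hfree
    refine ⟨hT, ?_, ?_⟩
    · rw [← Finset.insert_erase hl]
      exact Finset.insert_subset_insert _ hST'
    · rw [hT.inter_stubPairs_insert (Finset.mem_insert_self _ _) (Finset.mem_insert_self _ _),
        Finset.insert_inter_of_notMem (notMem_stubPairs hvX l), hT'X,
        Finset.insert_erase hl]

end Table

lemma sSup_image_add_const (B : Set EReal) (c : ℝ) :
    sSup ((fun x => x + (c : EReal)) '' B) = sSup B + (c : EReal) := by
  have hle {a b : EReal} : a ≤ b - c ↔ a + c ≤ b :=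
    EReal.le_sub_iff_add_le (Or.inl (EReal.coe_ne_bot c)) (Or.inl (EReal.coe_ne_top c))
  apply le_antisymm
  · exact sSup_le fun _ ⟨y, hy, hxy⟩ => hxy ▸ add_le_add_left (le_sSup hy) _
  · exact hle.mp (sSup_le fun x hx => hle.mpr (le_sSup ⟨x, hx, rfl⟩))

/-- the introduce-node recurrence of the bounded-treewidth DP for MaxSPED.
At an introduce node `t` with child `t'`, we have `X_t = X_{t'} ∪ {v}`,
`V_t = V_{t'} ∪ {v}`, and `v` has no neighbors in `V_{t'} \ X_{t'}` (expressed via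
`meets`).  For any valid stub set `S ⊆ S(X_t)` containing `(v, ℓ)`,
`W(t, S) = W(t', S \ {(v, ℓ)}) + ℓ`. -/
theorem stmt_8 {V : Type*} (cand : V → Finset ℝ)
    (meets : V → ℝ → V → ℝ → Prop)
    (meets_symm : ∀ u a w b, meets u a w b → meets w b u a)
    (Xt' Vt' : Finset V) (hXV : Xt' ⊆ Vt')
    (v : V) (hv : v ∉ Vt')
    (Xt Vt : Finset V) (hXt : Xt = insert v Xt') (hVt : Vt = insert v Vt')
    (hsep : ∀ u ∈ Vt' \ Xt', ∀ a b : ℝ, ¬ meets v a u b)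
    (S : Finset (V × ℝ)) (hS : ValidStubSet cand meets Xt S)
    (l : ℝ) (hl : (v, l) ∈ S) :
    Wtab cand meets Xt Vt S = Wtab cand meets Xt' Vt' (S.erase (v, l)) + (l : EReal) := by
  subst hXt hVt
  rw [Wtab_eq_sSup_image, Wtab_eq_sSup_image,
    completions_introduce cand meets meets_symm hXV hv hsep hS hl, Set.image_image,
    ← sSup_image_add_const, Set.image_image]
  congr 1
  refine Set.image_congr fun T hT => ?_
  have hlT : (v, l) ∉ T := fun h => hv (hT.1.mem_stubPairs h).1
  rw [inkOf_insert hlT, EReal.coe_add]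
end

section
/- A cycle of p segments t_1, ..., t_p in which consecutive segments cross (indices mod p) and each t_i has length α + 2β with its two crossing points at distance β from each endpoint admits exactly two ink-maximal PEDs with full ink value: one where each t_i places its (infinitesimal) gap at its crossing with t_{i+1}, and one where each t_i places its gap at its crossing with t_{i−1}. -/
/-!
If some segment does not put its gap at its crossing with its successor, the successor must put
its gap at its crossing with its predecessor, i.e. at position `β ≠ α + β`; then it is not gapped
at its successor crossing either, so the same happens to the next segment, and this propagates
around the whole cycle. Otherwise every segment is gapped at its successor crossing.
-/

theorem ZMod.forall_of_add_one {n : ℕ} [NeZero n] {P : ZMod n → Prop} (i : ZMod n) (hi : P i)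
    (hstep : ∀ j, P j → P (j + 1)) (k : ZMod n) : P k := by
  obtain ⟨m, rfl⟩ : ∃ m : ℕ, k = i + m := ⟨(k - i).val, by simp⟩
  induction m with
  | zero => simpa using hi
  | succ m ih => simpa [add_assoc] using hstep _ ih

theorem eq_const_or_eq_const_of_forall_or_add_one {n : ℕ} [NeZero n] {X : Type*}
    {g : ZMod n → X} {a b : X} (hab : a ≠ b) (h : ∀ i, g i = a ∨ g (i + 1) = b) :
    g = (fun _ => a) ∨ g = (fun _ => b) := by
  by_cases hall : ∀ i, g i = a
  · exact .inl (funext hall)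
  obtain ⟨i, hi⟩ := not_forall.mp hall
  refine .inr (funext (ZMod.forall_of_add_one (i + 1) ((h i).resolve_left hi) fun j hj => ?_))
  exact (h j).resolve_left (hj ▸ hab.symm)

theorem stmt_15_general (p : ℕ) [NeZero p] (α β : ℝ) (hα : 0 < α) (hβ : 0 < β)
    (valid : (ZMod p → ℝ) → Prop)
    (hvalid : ∀ g, valid g ↔
      (∀ i, 0 < g i ∧ g i < α + 2 * β) ∧
      ∀ i : ZMod p, g i = α + β ∨ g (i + 1) = β) :
    {g | valid g} =
      {fun _ => α + β, fun _ => β} := by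
  ext g
  simp only [Set.mem_ofPred_eq, Set.mem_insert_iff, Set.mem_singleton_iff, hvalid]
  constructor
  · rintro ⟨-, hcross⟩
    exact eq_const_or_eq_const_of_forall_or_add_one (by linarith : β < α + β).ne' hcross
  · rintro (rfl | rfl)
    · exact ⟨fun _ => ⟨by positivity, by linarith⟩, fun _ => .inl rfl⟩
    · exact ⟨fun _ => ⟨hβ, by linarith⟩, fun _ => .inr rfl⟩

/-- the MaxPED variable gadget.  A cycle of `p` segments `t_1, …, t_p`
(indices mod `p`) in which consecutive segments cross; each `t i` has length `α + 2β`,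
crossing `t (i-1)` at distance `β` from its left endpoint and `t (i+1)` at distance `β`
from its right endpoint (i.e. at position `α + β`).  A full-ink PED of the cycle draws
each segment entirely except for one (infinitesimal) gap at an interior point `g i`; it is
crossing-free iff for every crossing at least one of the two involved segments places its
gap at the crossing point.  The cycle admits exactly two such ink-maximal PEDs: one where
every segment places its gap at its crossing with its successor (position `α + β`), and
one where every segment places its gap at its crossing with its predecessor
(position `β`). -/
theorem stmt_15 (p : ℕ) (hp : 3 ≤ p) [NeZero p] (α β : ℝ) (hα : 0 < α) (hβ : 0 < β)
    (valid : (ZMod p → ℝ) → Prop)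
    (hvalid : ∀ g, valid g ↔
      (∀ i, 0 < g i ∧ g i < α + 2 * β) ∧
      ∀ i : ZMod p, g i = α + β ∨ g (i + 1) = β) :
    {g | valid g} =
      {fun _ => α + β, fun _ => β} :=
  stmt_15_general p α β hα hβ valid hvalid
end
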